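/- Let n ≥ 2, d₁,…,d_n, k ∈ ℝ, and let U ⊆ ℝⁿ be an open set all of whose points have pairwise distinct coordinates. Let β_ij (i ≠ j) be smooth functions on U satisfying (ED1) ∂_k β_ij = β_ik β_kj for pairwise distinct i,j,k, (ED2) e(β_ij) = 0 and (ED3) E(β_ij) = (d_i − d_j − 1)β_ij, and let H₁,…,H_n be smooth nowhere-vanishing functions satisfying (L1) ∂_j H_i = β_ij H_j for i ≠ j, (L2) e(H_i) = 0 and (L3) E(H_i) = d_i H_i. Let A be a smooth positive function on U with e(A) = 0, E(A) = k A, and which is a flat coordinate of the natural connection: ∂_j ∂_i A = Σ_m Γ^m_{ji} ∂_m A for all i, j, where the Christoffel symbols are Γ^i_{jk} = 0 for pairwise distinct i,j,k, Γ^i_{ij} = (H_j/H_i)β_ij for i ≠ j, Γ^i_{jj} = −Γ^i_{ij} for i ≠ j, and Γ^i_{ii} = −Σ_{l≠i}Γ^i_{li}. Define β̃_ij := β_ij − (H_i/H_j) ∂_j(ln A) for i ≠ j, and H̃_i := H_i/A. Then the β̃_ij satisfy (ED1), (ED2), and (ED3) with d_i replaced by d_i − k (i.e. E(β̃_ij)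 = (d_i − d_j − 1)β̃_ij), and the H̃_i satisfy (L1) ∂_j H̃_i = β̃_ij H̃_j for i ≠ j, (L2) e(H̃_i) = 0, and (L3) E(H̃_i) = (d_i − k) H̃_i. -/

import Mathlib

/-- Partial derivative `∂_i f` of a function `f : ℝⁿ → ℝ` at `x`. -/
noncomputable def pd {n : ℕ} (i : Fin n) (f : (Fin n → ℝ) → ℝ) (x : Fin n → ℝ) : ℝ :=
  fderiv ℝ f x (Pi.single i 1)

/-- Christoffel symbols `Γ^i_{jk}` of the natural connection built from rotation
coefficients `β` and Lamé coefficients `H`. -/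
noncomputable def Gamma {n : ℕ} (β : Fin n → Fin n → (Fin n → ℝ) → ℝ)
    (H : Fin n → (Fin n → ℝ) → ℝ) (i j k : Fin n) (x : Fin n → ℝ) : ℝ :=
  if i = j then
    if j = k then -(∑ l ∈ Finset.univ.erase i, (H l x / H i x) * β i l x)
    else (H k x / H i x) * β i k x
  else if i = k then (H j x / H i x) * β i j x
  else if j = k then -((H j x / H i x) * β i j x)
  else 0

/-- The transformed rotation coefficients `β̃_ij = β_ij - (H_i/H_j) ∂_j (ln A)`. -/
noncomputable def betaTilde {n : ℕ} (β : Fin n → Fin n → (Fin n → ℝ) → ℝ)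
    (H : Fin n → (Fin n → ℝ) → ℝ) (A : (Fin n → ℝ) → ℝ)
    (i j : Fin n) (x : Fin n → ℝ) : ℝ :=
  β i j x - (H i x / H j x) * pd j (fun y => Real.log (A y)) x

/-- The transformed Lamé coefficients `H̃_i = H_i / A`. -/
noncomputable def Htilde {n : ℕ} (H : Fin n → (Fin n → ℝ) → ℝ)
    (A : (Fin n → ℝ) → ℝ) (i : Fin n) (x : Fin n → ℝ) : ℝ :=
  H i x / A x

section PdAux

variable {n : ℕ} {f g : (Fin n → ℝ) → ℝ} {x : Fin n → ℝ} {U : Set (Fin n → ℝ)}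

lemma pd_congr (h : f =ᶠ[nhds x] g) (i : Fin n) : pd i f x = pd i g x := by
  unfold pd; rw [h.fderiv_eq]

lemma pd_const (i : Fin n) (c : ℝ) : pd i (fun _ => c) x = 0 := by
  unfold pd; rw [fderiv_fun_const]; simp

lemma pd_sub (hf : DifferentiableAt ℝ f x) (hg : DifferentiableAt ℝ g x) (i : Fin n) :
    pd i (fun y => f y - g y) x = pd i f x - pd i g x := by
  unfold pd; rw [fderiv_fun_sub hf hg]; simp

lemma pd_mul (hf : DifferentiableAt ℝ f x) (hg : DifferentiableAt ℝ g x) (i : Fin n) :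
    pd i (fun y => f y * g y) x = f x * pd i g x + g x * pd i f x := by
  unfold pd; rw [fderiv_fun_mul hf hg]; simp

lemma pd_inv (hg : DifferentiableAt ℝ g x) (h0 : g x ≠ 0) (i : Fin n) :
    pd i (fun y => (g y)⁻¹) x = -((g x)^2)⁻¹ * pd i g x := by
  have h : HasFDerivAt (fun y => (g y)⁻¹) (-((g x)^2)⁻¹ • fderiv ℝ g x) x :=
    (hasDerivAt_inv h0).comp_hasFDerivAt x hg.hasFDerivAt
  unfold pd; rw [h.fderiv]; simp

lemma diffAt_div (hf : DifferentiableAt ℝ f x) (hg : DifferentiableAt ℝ g x)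
    (h0 : g x ≠ 0) : DifferentiableAt ℝ (fun y => f y / g y) x := by
  simp only [div_eq_mul_inv]; exact hf.mul (hg.inv h0)

lemma pd_div (hf : DifferentiableAt ℝ f x) (hg : DifferentiableAt ℝ g x) (h0 : g x ≠ 0)
    (i : Fin n) :
    pd i (fun y => f y / g y) x = (pd i f x * g x - f x * pd i g x) / (g x)^2 := by
  simp only [div_eq_mul_inv]
  rw [pd_mul (g := fun y => (g y)⁻¹) hf (hg.inv h0), pd_inv hg h0]
  field_simp
  ring

lemma pd_log (hf : DifferentiableAt ℝ f x) (h0 : f x ≠ 0) (i : Fin n) :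
    pd i (fun y => Real.log (f y)) x = pd i f x / f x := by
  have h := hf.hasFDerivAt.log h0
  unfold pd; rw [h.fderiv]; simp [div_eq_inv_mul]

lemma pd_sum {F : Fin n → (Fin n → ℝ) → ℝ} (h : ∀ l, DifferentiableAt ℝ (F l) x) (i : Fin n) :
    pd i (fun y => ∑ l, F l y) x = ∑ l, pd i (F l) x := by
  unfold pd; rw [fderiv_fun_sum fun l _ => h l]; simp

lemma diffAt_coord (l : Fin n) : DifferentiableAt ℝ (fun y : Fin n → ℝ => y l) x :=
  (ContinuousLinearMap.proj (R := ℝ) (φ := fun _ : Fin n => ℝ) l).differentiableAt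

lemma pd_coord (i l : Fin n) :
    pd i (fun y : Fin n → ℝ => y l) x = (Pi.single i (1:ℝ) : Fin n → ℝ) l := by
  unfold pd
  rw [show (fun y : Fin n → ℝ => y l)
        = ⇑(ContinuousLinearMap.proj (R := ℝ) (φ := fun _ : Fin n => ℝ) l) from rfl,
    ContinuousLinearMap.fderiv]
  rfl

lemma diffAt_of_contDiffOn (hU : IsOpen U) (hf : ContDiffOn ℝ (⊤ : ℕ∞) f U) (hx : x ∈ U) :
    DifferentiableAt ℝ f x :=
  (hf.contDiffAt (hU.mem_nhds hx)).differentiableAt (by simp)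

lemma contDiffOn_pd (hU : IsOpen U) (hf : ContDiffOn ℝ (⊤ : ℕ∞) f U) (i : Fin n) :
    ContDiffOn ℝ (⊤ : ℕ∞) (fun y => pd i f y) U := by
  have h1 : ContDiffOn ℝ (⊤ : ℕ∞) (fun y => fderiv ℝ f y) U := hf.fderiv_of_isOpen hU (by simp)
  exact h1.clm_apply contDiffOn_const

lemma pd_comm (hU : IsOpen U) (hf : ContDiffOn ℝ (⊤ : ℕ∞) f U) (hx : x ∈ U) (i j : Fin n) :
    pd i (fun y => pd j f y) x = pd j (fun y => pd i f y) x := by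
  have hct : ContDiffAt ℝ (⊤ : ℕ∞) f x := hf.contDiffAt (hU.mem_nhds hx)
  have hd : DifferentiableAt ℝ (fderiv ℝ f) x :=
    (hct.fderiv_right (m := (⊤ : ℕ∞)) (by simp)).differentiableAt (by simp)
  have hsym := hct.isSymmSndFDerivAt (by rw [minSmoothness_of_isRCLikeNormedField]; exact WithTop.coe_le_coe.mpr le_top)
  have happ : ∀ v w : Fin n → ℝ,
      fderiv ℝ (fun y => fderiv ℝ f y w) x v = fderiv ℝ (fderiv ℝ f) x v w := by
    intro v w
    rw [fderiv_clm_apply hd (differentiableAt_const w)]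
    simp
  unfold pd
  rw [happ, happ, hsym]

end PdAux

set_option maxHeartbeats 1600000 in
theorem reciprocal_transformation {n : ℕ} (hn : 2 ≤ n) (d : Fin n → ℝ) (k : ℝ)
    (U : Set (Fin n → ℝ)) (hU : IsOpen U)
    (hdist : ∀ x ∈ U, ∀ i j : Fin n, i ≠ j → x i ≠ x j)
    (β : Fin n → Fin n → (Fin n → ℝ) → ℝ)
    (hβ : ∀ i j : Fin n, i ≠ j → ContDiffOn ℝ (⊤ : ℕ∞) (β i j) U)
    (hED1 : ∀ i j k' : Fin n, i ≠ j → j ≠ k' → i ≠ k' →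
      ∀ x ∈ U, pd k' (β i j) x = β i k' x * β k' j x)
    (hED2 : ∀ i j : Fin n, i ≠ j → ∀ x ∈ U, ∑ l, pd l (β i j) x = 0)
    (hED3 : ∀ i j : Fin n, i ≠ j → ∀ x ∈ U,
      ∑ l, x l * pd l (β i j) x = (d i - d j - 1) * β i j x)
    (H : Fin n → (Fin n → ℝ) → ℝ)
    (hH : ∀ i, ContDiffOn ℝ (⊤ : ℕ∞) (H i) U)
    (hH0 : ∀ i, ∀ x ∈ U, H i x ≠ 0)
    (hL1 : ∀ i j : Fin n, i ≠ j → ∀ x ∈ U, pd j (H i) x = β i j x * H j x)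
    (hL2 : ∀ i, ∀ x ∈ U, ∑ l, pd l (H i) x = 0)
    (hL3 : ∀ i, ∀ x ∈ U, ∑ l, x l * pd l (H i) x = d i * H i x)
    (A : (Fin n → ℝ) → ℝ) (hA : ContDiffOn ℝ (⊤ : ℕ∞) A U)
    (hApos : ∀ x ∈ U, 0 < A x)
    (hAe : ∀ x ∈ U, ∑ l, pd l A x = 0)
    (hAE : ∀ x ∈ U, ∑ l, x l * pd l A x = k * A x)
    -- A is a flat coordinate of the natural connection:
    -- ∂_j ∂_i A = Σ_m Γ^m_{ji} ∂_m A
    (hAflat : ∀ x ∈ U, ∀ i j : Fin n,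
      pd j (fun y => pd i A y) x = ∑ m, Gamma β H m j i x * pd m A x) :
    -- (ED1) for β̃
    (∀ i j k' : Fin n, i ≠ j → j ≠ k' → i ≠ k' → ∀ x ∈ U,
      pd k' (betaTilde β H A i j) x
        = betaTilde β H A i k' x * betaTilde β H A k' j x) ∧
    -- (ED2) for β̃
    (∀ i j : Fin n, i ≠ j → ∀ x ∈ U, ∑ l, pd l (betaTilde β H A i j) x = 0) ∧
    -- (ED3) for β̃ (the degrees d_i - k give the same differences d_i - d_j - 1)
    (∀ i j : Fin n, i ≠ j → ∀ x ∈ U,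
      ∑ l, x l * pd l (betaTilde β H A i j) x
        = ((d i - k) - (d j - k) - 1) * betaTilde β H A i j x) ∧
    -- (L1) for H̃
    (∀ i j : Fin n, i ≠ j → ∀ x ∈ U,
      pd j (Htilde H A i) x = betaTilde β H A i j x * Htilde H A j x) ∧
    -- (L2) for H̃
    (∀ i, ∀ x ∈ U, ∑ l, pd l (Htilde H A i) x = 0) ∧
    -- (L3) for H̃ with degree d_i - k
    (∀ i, ∀ x ∈ U,
      ∑ l, x l * pd l (Htilde H A i) x = (d i - k) * Htilde H A i x) := by
  classical
  set L : (Fin n → ℝ) → ℝ := fun y => Real.log (A y) with hLdef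
  have hA0 : ∀ x ∈ U, A x ≠ 0 := fun x hx => (hApos x hx).ne'
  have hLc : ContDiffOn ℝ (⊤ : ℕ∞) L U := hA.log hA0
  have dA : ∀ x ∈ U, DifferentiableAt ℝ A x := fun x hx => diffAt_of_contDiffOn hU hA hx
  have dH : ∀ i, ∀ x ∈ U, DifferentiableAt ℝ (H i) x :=
    fun i x hx => diffAt_of_contDiffOn hU (hH i) hx
  have dβ : ∀ i j, i ≠ j → ∀ x ∈ U, DifferentiableAt ℝ (β i j) x :=
    fun i j hij x hx => diffAt_of_contDiffOn hU (hβ i j hij) hx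
  have dpdL : ∀ j, ∀ x ∈ U, DifferentiableAt ℝ (fun y => pd j L y) x :=
    fun j x hx => diffAt_of_contDiffOn hU (contDiffOn_pd hU hLc j) hx
  have dpdA : ∀ j, ∀ x ∈ U, DifferentiableAt ℝ (fun y => pd j A y) x :=
    fun j x hx => diffAt_of_contDiffOn hU (contDiffOn_pd hU hA j) hx
  -- (F1): ∂_j L = ∂_j A / A on U
  have hF1 : ∀ j, ∀ x ∈ U, pd j L x = pd j A x / A x :=
    fun j x hx => pd_log (dA x hx) (hA0 x hx) j
  -- e(L) = 0 on U
  have hLe : ∀ x ∈ U, ∑ l, pd l L x = 0 := by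
    intro x hx
    have h1 : ∑ l, pd l L x = (∑ l, pd l A x) / A x := by
      rw [Finset.sum_div]; exact Finset.sum_congr rfl fun l _ => hF1 l x hx
    rw [h1, hAe x hx, zero_div]
  -- E(L) = k on U
  have hLE : ∀ x ∈ U, ∑ l, x l * pd l L x = k := by
    intro x hx
    have h1 : ∑ l, x l * pd l L x = (∑ l, x l * pd l A x) / A x := by
      rw [Finset.sum_div]
      exact Finset.sum_congr rfl fun l _ => by rw [hF1 l x hx]; ring
    rw [h1, hAE x hx, mul_div_assoc, div_self (hA0 x hx), mul_one]
  -- (F6): Σ_l ∂_l ∂_j L = 0 on U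
  have hF6 : ∀ j, ∀ x ∈ U, ∑ l, pd l (fun y => pd j L y) x = 0 := by
    intro j x hx
    have heq : (fun y => ∑ l, pd l L y) =ᶠ[nhds x] (fun _ => (0:ℝ)) := by
      filter_upwards [hU.mem_nhds hx] with y hy
      exact hLe y hy
    calc ∑ l, pd l (fun y => pd j L y) x
        = ∑ l, pd j (fun y => pd l L y) x :=
          Finset.sum_congr rfl fun l _ => pd_comm hU hLc hx l j
      _ = pd j (fun y => ∑ l, pd l L y) x := (pd_sum (fun l => dpdL l x hx) j).symm
      _ = pd j (fun _ => (0:ℝ)) x := pd_congr heq j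
      _ = 0 := pd_const j 0
  -- (F7): Σ_l x l * ∂_l ∂_j L = - ∂_j L on U
  have hF7 : ∀ j, ∀ x ∈ U, ∑ l, x l * pd l (fun y => pd j L y) x = - pd j L x := by
    intro j x hx
    have heq : (fun y => ∑ l, y l * pd l L y) =ᶠ[nhds x] (fun _ => k) := by
      filter_upwards [hU.mem_nhds hx] with y hy
      exact hLE y hy
    have hdsum : ∀ l, DifferentiableAt ℝ (fun y => y l * pd l L y) x :=
      fun l => (diffAt_coord l).mul (dpdL l x hx)
    have h0 : ∑ l, pd j (fun y => y l * pd l L y) x = 0 := by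
      rw [← pd_sum hdsum j, pd_congr heq j, pd_const]
    have h1 : ∀ l, pd j (fun y => y l * pd l L y) x
        = x l * pd l (fun y => pd j L y) x
          + (Pi.single j (1:ℝ) : Fin n → ℝ) l * pd l L x := by
      intro l
      rw [pd_mul (diffAt_coord l) (dpdL l x hx) j, pd_coord, pd_comm hU hLc hx j l]
      ring
    rw [Finset.sum_congr rfl fun l _ => h1 l, Finset.sum_add_distrib] at h0
    have h2 : ∑ l, (Pi.single j (1:ℝ) : Fin n → ℝ) l * pd l L x = pd j L x := by
      simp [Pi.single_apply]
    rw [h2] at h0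
    linarith
  -- evaluation of the Christoffel sum
  have hGamma : ∀ j k' : Fin n, k' ≠ j → ∀ x ∈ U,
      ∑ m, Gamma β H m k' j x * pd m A x
        = (H j x / H k' x) * β k' j x * pd k' A x
          + (H k' x / H j x) * β j k' x * pd j A x := by
    intro j k' hkj x hx
    have h1 : ∀ m, Gamma β H m k' j x * pd m A x
        = (if m = k' then (H j x / H k' x) * β k' j x * pd k' A x else 0)
          + (if m = j then (H k' x / H j x) * β j k' x * pd j A x else 0) := by
      intro m
      rcases eq_or_ne m k' with rfl | hmk
      · simp [Gamma, hkj]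
      · rcases eq_or_ne m j with rfl | hmj
        · simp [Gamma, hmk, hkj]
        · simp [Gamma, hmk, hmj, hkj]
    rw [Finset.sum_congr rfl fun m _ => h1 m, Finset.sum_add_distrib]
    simp
  -- (F5): second derivatives of L via flatness
  have hF5 : ∀ j k' : Fin n, k' ≠ j → ∀ x ∈ U,
      pd k' (fun y => pd j L y) x
        = (H j x / H k' x) * β k' j x * pd k' L x
          + (H k' x / H j x) * β j k' x * pd j L x
          - pd j L x * pd k' L x := by
    intro j k' hkj x hx
    have heq : (fun y => pd j L y) =ᶠ[nhds x] (fun y => pd j A y / A y) := by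
      filter_upwards [hU.mem_nhds hx] with y hy
      exact hF1 j y hy
    rw [pd_congr heq k', pd_div (dpdA j x hx) (dA x hx) (hA0 x hx) k',
      hAflat x hx j k', hGamma j k' hkj x hx, hF1 j x hx, hF1 k' x hx]
    field_simp [hA0 x hx, hH0 j x hx, hH0 k' x hx]
  -- master formula for derivatives of betaTilde
  have dbt : ∀ i j : Fin n, i ≠ j → ∀ x ∈ U, ∀ l,
      pd l (betaTilde β H A i j) x
        = pd l (β i j) x
          + (-(pd j L x / H j x)) * pd l (H i) x
          + (H i x * pd j L x / (H j x)^2) * pd l (H j) x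
          + (-(H i x / H j x)) * pd l (fun y => pd j L y) x := by
    intro i j hij x hx l
    have e1 : betaTilde β H A i j = fun y => β i j y - (H i y / H j y) * pd j L y := rfl
    rw [e1, pd_sub (dβ i j hij x hx)
        (g := fun y => H i y / H j y * pd j L y)
        ((diffAt_div (dH i x hx) (dH j x hx) (hH0 j x hx)).mul (dpdL j x hx)) l,
      pd_mul (f := fun y => H i y / H j y) (g := fun y => pd j L y) (diffAt_div (dH i x hx) (dH j x hx) (hH0 j x hx)) (dpdL j x hx) l,
      pd_div (dH i x hx) (dH j x hx) (hH0 j x hx) l]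
    field_simp [hH0 j x hx]
    ring
  have ebt : ∀ (a b : Fin n) (x : Fin n → ℝ),
      betaTilde β H A a b x = β a b x - H a x / H b x * pd b L x := fun a b x => rfl
  have eHt : ∀ (a : Fin n) (x : Fin n → ℝ), Htilde H A a x = H a x / A x := fun a x => rfl
  have dHt : ∀ i, ∀ x ∈ U, ∀ l, pd l (Htilde H A i) x
      = (pd l (H i) x * A x - H i x * pd l A x) / (A x)^2 := by
    intro i x hx l
    have e1 : Htilde H A i = fun y => H i y / A y := rfl
    rw [e1, pd_div (dH i x hx) (dA x hx) (hA0 x hx) l]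
  refine ⟨?_, ?_, ?_, ?_, ?_, ?_⟩
  · -- (ED1)
    intro i j k' hij hjk hik x hx
    rw [dbt i j hij x hx k', hED1 i j k' hij hjk hik x hx, hL1 i k' hik x hx,
      hL1 j k' hjk x hx, hF5 j k' hjk.symm x hx, ebt, ebt]
    field_simp [hH0 j x hx, hH0 k' x hx]
    ring
  · -- (ED2)
    intro i j hij x hx
    rw [Finset.sum_congr rfl fun l _ => dbt i j hij x hx l]
    simp only [Finset.sum_add_distrib, ← Finset.mul_sum]
    rw [hED2 i j hij x hx, hL2 i x hx, hL2 j x hx, hF6 j x hx]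
    ring
  · -- (ED3)
    intro i j hij x hx
    have h1 : ∀ l, x l * pd l (betaTilde β H A i j) x
        = x l * pd l (β i j) x
          + (-(pd j L x / H j x)) * (x l * pd l (H i) x)
          + (H i x * pd j L x / (H j x)^2) * (x l * pd l (H j) x)
          + (-(H i x / H j x)) * (x l * pd l (fun y => pd j L y) x) := by
      intro l; rw [dbt i j hij x hx l]; ring
    rw [Finset.sum_congr rfl fun l _ => h1 l]
    simp only [Finset.sum_add_distrib, ← Finset.mul_sum]
    rw [hED3 i j hij x hx, hL3 i x hx, hL3 j x hx, hF7 j x hx, ebt]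
    field_simp [hH0 j x hx]
    ring
  · -- (L1)
    intro i j hij x hx
    rw [dHt i x hx j, hL1 i j hij x hx, ebt, eHt, hF1 j x hx]
    field_simp [hA0 x hx, hH0 j x hx]
  · -- (L2)
    intro i x hx
    have h1 : ∀ l, pd l (Htilde H A i) x
        = (1/(A x)) * pd l (H i) x + (-(H i x)/(A x)^2) * pd l A x := by
      intro l; rw [dHt i x hx l]; field_simp [hA0 x hx]; ring
    rw [Finset.sum_congr rfl fun l _ => h1 l]
    simp only [Finset.sum_add_distrib, ← Finset.mul_sum]
    rw [hL2 i x hx, hAe x hx]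
    ring
  · -- (L3)
    intro i x hx
    have h1 : ∀ l, x l * pd l (Htilde H A i) x
        = (1/(A x)) * (x l * pd l (H i) x) + (-(H i x)/(A x)^2) * (x l * pd l A x) := by
      intro l; rw [dHt i x hx l]; field_simp [hA0 x hx]; ring
    rw [Finset.sum_congr rfl fun l _ => h1 l]
    simp only [Finset.sum_add_distrib, ← Finset.mul_sum]
    rw [hL3 i x hx, hAE x hx, eHt]
    field_simp [hA0 x hx]
    ring
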